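/- arXiv:1210.7836 — 2 statements merged into one kernel-verified Lean document; each statement's English description precedes it below -/
import Mathlib

section
/- Let F be a field of characteristic p, a₁,...,aₙ ∈ F, and π = ⟪a₁,...,aₙ⟫ the associated quasi-Pfister form. Then the anisotropic part of π is again (isomorphic to) a quasi-Pfister form; more precisely, after reordering, π_an ≅ ⟪a₁,...,a_m⟫ where p^m = [F^p(a₁,...,aₙ) : F^p]. -/
set_option synthInstance.maxHeartbeats 800000
set_option maxHeartbeats 1000000

open scoped BigOperators

/-- Coefficients of the quasi-Pfister form `⟪a₁,…,aₙ⟫`. -/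
def pfCoeff {F : Type*} [Field F] {p n : ℕ} (a : Fin n → F) : (Fin n → Fin p) → F :=
  fun e => ∏ i, a i ^ (e i : ℕ)

/-- The value map of the quasi-Pfister form `⟪a₁,…,aₙ⟫`. -/
def pfVal {F : Type*} [Field F] (p n : ℕ) (a : Fin n → F) : ((Fin n → Fin p) → F) → F :=
  fun x => ∑ e, pfCoeff a e * x e ^ p

/-!
Write `K = F^p`. The values of `⟪a₁,…,aₙ⟫` are the `K`-linear combinations of the monomials
`a^e` (`0 ≤ eᵢ < p`), and these span the field `K(a₁,…,aₙ)`, because a product of two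
monomials is a monomial times a `p`-th power. Anisotropy of the form means that the monomials
are `K`-linearly independent, so an anisotropic `⟪b₁,…,b_m⟫` with the same values is a form
whose monomials are a `K`-basis of `K(a₁,…,aₙ)`, which has dimension `p^m`. Such `bᵢ` are
chosen greedily: `aᵢ` is kept exactly when it does not lie in the field `L` generated over `K`
by the entries after it; then `X^p - aᵢ^p` is its minimal polynomial over `L`, and
`1, aᵢ, …, aᵢ^(p-1)` are independent over `L`.
-/

open Polynomial IntermediateField

def PfAnisotropic {F : Type*} [Field F] (p : ℕ) {m : ℕ} (b : Fin m → F) : Prop :=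
  ∀ x, pfVal p m b x = 0 → x = 0

section Field

variable {p : ℕ} {F : Type*} [Field F]

theorem pfCoeff_mul_pfCoeff {n : ℕ} (a : Fin n → F) (e f : Fin n → Fin p) :
    ∃ w : F, pfCoeff a e * pfCoeff a f = w ^ p * pfCoeff a (e + f) := by
  refine ⟨∏ i, a i ^ (((e i : ℕ) + f i) / p), ?_⟩
  simp only [pfCoeff, ← Finset.prod_mul_distrib, ← Finset.prod_pow]
  refine Finset.prod_congr rfl fun i _ => ?_
  rw [← pow_add, ← pow_mul, ← pow_add, Pi.add_apply, Fin.val_add, mul_comm, Nat.div_add_mod]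

theorem pfVal_cons {m : ℕ} (c : F) (b : Fin m → F) (x : (Fin (m + 1) → Fin p) → F) :
    pfVal p (m + 1) (Fin.cons c b) x =
      ∑ j : Fin p, pfVal p m b (fun e => x (Fin.cons j e)) * c ^ (j : ℕ) := by
  rw [pfVal, ← (Fin.consEquiv fun _ => Fin p).sum_comp, Fintype.sum_prod_type]
  refine Finset.sum_congr rfl fun j _ => ?_
  rw [pfVal, Finset.sum_mul]
  refine Finset.sum_congr rfl fun e _ => ?_
  rw [show (Fin.consEquiv fun _ => Fin p) (j, e) = Fin.cons j e from rfl]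
  simp only [pfCoeff, Fin.prod_univ_succ, Fin.cons_zero, Fin.cons_succ]
  ring

variable [Fact p.Prime]

theorem pfAnisotropic_of_fin_zero (b : Fin 0 → F) : PfAnisotropic p b := by
  intro x hx
  simp only [pfVal, pfCoeff, Fintype.sum_unique, Finset.univ_eq_empty, Finset.prod_empty,
    one_mul, pow_eq_zero_iff (Fact.out : p.Prime).ne_zero] at hx
  funext e
  exact (congrArg x (Subsingleton.elim e _)).trans hx

variable [CharP F p]

theorem linearIndependent_pow_of_pow_mem {L : Subfield F} {c : F} (hc : c ∉ L)
    (hcp : c ^ p ∈ L) : LinearIndependent L fun j : Fin p => c ^ (j : ℕ) := by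
  have hp : p.Prime := Fact.out
  have hroot : ∀ b : L, b ^ p ≠ ⟨c ^ p, hcp⟩ := fun b hb =>
    hc (frobenius_inj F p (congrArg Subtype.val hb) ▸ b.2)
  have hmin : X ^ p - C ⟨c ^ p, hcp⟩ = minpoly L c :=
    minpoly.eq_of_irreducible_of_monic (X_pow_sub_C_irreducible_of_prime hp hroot)
      (by simp [sub_eq_zero]; rfl) (monic_X_pow_sub_C _ hp.ne_zero)
  have h := linearIndependent_pow (K := L) c
  rwa [← hmin, natDegree_X_pow_sub_C] at h

theorem PfAnisotropic.cons {m : ℕ} {b : Fin m → F} (hb : PfAnisotropic p b) {L : Subfield F}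
    (hbL : Set.range (pfVal p m b) ⊆ L) {c : F} (hc : c ∉ L) (hcp : c ^ p ∈ L) :
    PfAnisotropic p (Fin.cons c b : Fin (m + 1) → F) := by
  intro x hx
  let y : Fin p → L := fun j => ⟨pfVal p m b (fun e => x (Fin.cons j e)), hbL ⟨_, rfl⟩⟩
  have hy : ∑ j, y j • c ^ (j : ℕ) = 0 := by
    rw [pfVal_cons] at hx
    exact hx
  have hpow : LinearIndependent L fun j : Fin p => c ^ (j : ℕ) :=
    linearIndependent_pow_of_pow_mem hc hcp
  have hcoeff (j : Fin p) : pfVal p m b (fun e => x (Fin.cons j e)) = 0 :=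
    Subtype.ext_iff.1 (Fintype.linearIndependent_iff.1 hpow y hy j)
  funext E
  rw [← Fin.cons_self_tail E]
  exact congrFun (hb _ (hcoeff (E 0))) (Fin.tail E)

end Field

section PthPowers

variable {p : ℕ} {F : Type*} [Field F] {K : Subfield F}

theorem pow_mem_of_coe_eq_range_pow (hK : (K : Set F) = Set.range fun x : F => x ^ p) (x : F) :
    x ^ p ∈ K := by
  rw [← SetLike.mem_coe, hK]
  exact ⟨x, rfl⟩

theorem exists_pow_eq_of_coe_eq_range_pow (hK : (K : Set F) = Set.range fun x : F => x ^ p)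
    (y : K) : ∃ x : F, x ^ p = y := by
  have hy : (y : F) ∈ (K : Set F) := y.2
  rwa [hK] at hy

theorem range_pfVal_eq_span (hK : (K : Set F) = Set.range fun x : F => x ^ p) {n : ℕ}
    (a : Fin n → F) :
    Set.range (pfVal p n a) = Submodule.span K (Set.range (pfCoeff (p := p) a)) := by
  ext z
  rw [SetLike.mem_coe, Submodule.mem_span_range_iff_exists_fun]
  constructor
  · rintro ⟨x, rfl⟩
    refine ⟨fun e => ⟨x e ^ p, pow_mem_of_coe_eq_range_pow hK (x e)⟩, ?_⟩
    exact Finset.sum_congr rfl fun e _ => mul_comm _ _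
  · rintro ⟨g, rfl⟩
    choose x hx using fun e => exists_pow_eq_of_coe_eq_range_pow hK (g e)
    exact ⟨x, Finset.sum_congr rfl fun e _ => by rw [hx e]; exact mul_comm _ _⟩

theorem span_pfCoeff_mul_le (hK : ∀ x : F, x ^ p ∈ K) {n : ℕ} (a : Fin n → F) :
    Submodule.span K (Set.range (pfCoeff (p := p) a)) *
      Submodule.span K (Set.range (pfCoeff (p := p) a)) ≤
      Submodule.span K (Set.range (pfCoeff (p := p) a)) := by
  rw [Submodule.span_mul_span, Submodule.span_le]
  rintro _ ⟨_, ⟨e, rfl⟩, _, ⟨f, rfl⟩, rfl⟩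
  obtain ⟨w, hw⟩ := pfCoeff_mul_pfCoeff a e f
  rw [SetLike.mem_coe]
  change pfCoeff a e * pfCoeff a f ∈ _
  rw [hw]
  exact Submodule.smul_mem _ (⟨w ^ p, hK w⟩ : K) (Submodule.subset_span ⟨e + f, rfl⟩)

variable [Fact p.Prime]

theorem span_pfCoeff_eq_adjoin (hK : ∀ x : F, x ^ p ∈ K) {n : ℕ} (a : Fin n → F) :
    Submodule.span K (Set.range (pfCoeff (p := p) a)) =
      Subalgebra.toSubmodule (adjoin K (Set.range a)).toSubalgebra := by
  have hp : p.Prime := Fact.out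
  let S : Subalgebra K F :=
    (Submodule.span K (Set.range (pfCoeff (p := p) a))).toSubalgebra
      (Submodule.subset_span ⟨0, by simp [pfCoeff]⟩)
      fun x y hx hy => span_pfCoeff_mul_le hK a (Submodule.mul_mem_mul hx hy)
  have hS : S = Algebra.adjoin K (Set.range a) := by
    refine le_antisymm ?_ (Algebra.adjoin_le ?_)
    · have : Submodule.span K (Set.range (pfCoeff (p := p) a)) ≤
          Subalgebra.toSubmodule (Algebra.adjoin K (Set.range a)) := by
        rw [Submodule.span_le]
        rintro _ ⟨e, rfl⟩
        exact Subalgebra.prod_mem _ fun i _ =>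
          Subalgebra.pow_mem _ (Algebra.subset_adjoin (Set.mem_range_self i)) _
      exact this
    · rintro _ ⟨i, rfl⟩
      refine Submodule.subset_span (R := K) ⟨Pi.single i 1, ?_⟩
      rw [pfCoeff, Fintype.prod_eq_single i fun j hj => by simp [Pi.single_eq_of_ne hj]]
      simp [Nat.mod_eq_of_lt hp.one_lt]
  have halg : ∀ x ∈ Set.range a, IsAlgebraic K x := fun x _ =>
    IsAlgebraic.of_pow hp.pos (isAlgebraic_algebraMap (⟨x ^ p, hK x⟩ : K))
  rw [adjoin_toSubalgebra_of_isAlgebraic halg, ← hS]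
  rfl

theorem range_pfVal_eq_adjoin (hK : (K : Set F) = Set.range fun x : F => x ^ p) {n : ℕ}
    (a : Fin n → F) : Set.range (pfVal p n a) = adjoin K (Set.range a) := by
  rw [range_pfVal_eq_span hK, span_pfCoeff_eq_adjoin (pow_mem_of_coe_eq_range_pow hK)]
  rfl

theorem PfAnisotropic.linearIndependent_pfCoeff
    (hK : (K : Set F) = Set.range fun x : F => x ^ p) {m : ℕ} {b : Fin m → F}
    (hb : PfAnisotropic p b) : LinearIndependent K (pfCoeff (p := p) b) := by
  rw [Fintype.linearIndependent_iff]
  intro g hg e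
  choose x hx using fun e => exists_pow_eq_of_coe_eq_range_pow hK (g e)
  have hx0 : x = 0 := hb x <| by
    rw [← hg]
    exact Finset.sum_congr rfl fun e _ => by rw [hx e]; exact mul_comm _ _
  ext
  rw [← hx e, hx0, Pi.zero_apply, zero_pow (Fact.out : p.Prime).ne_zero, ZeroMemClass.coe_zero]

theorem PfAnisotropic.finrank_adjoin (hK : (K : Set F) = Set.range fun x : F => x ^ p)
    {m : ℕ} {b : Fin m → F} (hb : PfAnisotropic p b) :
    Module.finrank K (adjoin K (Set.range b)) = p ^ m := by
  rw [← finrank_eq_finrank_subalgebra, ← Subalgebra.finrank_toSubmodule,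
    ← span_pfCoeff_eq_adjoin (pow_mem_of_coe_eq_range_pow hK),
    finrank_span_eq_card (hb.linearIndependent_pfCoeff hK)]
  simp

variable [CharP F p]

theorem exists_pfAnisotropic_subfamily (hK : (K : Set F) = Set.range fun x : F => x ^ p) :
    ∀ {n : ℕ} (a : Fin n → F), ∃ (m : ℕ) (f : Fin m → Fin n), Function.Injective f ∧
      PfAnisotropic p (a ∘ f) ∧ adjoin K (Set.range (a ∘ f)) = adjoin K (Set.range a)
  | 0, a => ⟨0, id, Function.injective_id, pfAnisotropic_of_fin_zero _, rfl⟩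
  | n + 1, a => by
    obtain ⟨c, b, rfl⟩ : ∃ c b, a = Fin.cons c b := ⟨a 0, Fin.tail a, (Fin.cons_self_tail a).symm⟩
    obtain ⟨m, f, hf, hb, hbf⟩ := exists_pfAnisotropic_subfamily hK b
    rw [Fin.range_cons]
    by_cases hc : c ∈ adjoin K (Set.range b)
    · refine ⟨m, Fin.succ ∘ f, (Fin.succ_injective n).comp hf, hb, ?_⟩
      rw [← adjoin_insert_adjoin, Set.insert_eq_of_mem hc, adjoin_self]
      exact hbf
    · have hcomp : Fin.cons c b ∘ Fin.cons 0 (Fin.succ ∘ f) = Fin.cons c (b ∘ f) := by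
        rw [Fin.comp_cons]
        rfl
      refine ⟨m + 1, Fin.cons 0 (Fin.succ ∘ f), ?_, ?_, ?_⟩
      · exact Fin.cons_injective_iff.2
          ⟨fun ⟨i, hi⟩ => Fin.succ_ne_zero _ hi, (Fin.succ_injective n).comp hf⟩
      · rw [hcomp]
        refine hb.cons (L := (adjoin K (Set.range b)).toSubfield) ?_ hc
          ((adjoin K _).algebraMap_mem ⟨c ^ p, pow_mem_of_coe_eq_range_pow hK c⟩)
        rw [range_pfVal_eq_adjoin hK, hbf]
        rfl
      · rw [hcomp, Fin.range_cons, ← adjoin_insert_adjoin, hbf, adjoin_insert_adjoin]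

end PthPowers

/-- The anisotropic part of a quasi-Pfister form `π = ⟪a₁,…,aₙ⟫` over a
field `F` of characteristic `p` is again a quasi-Pfister form: after reordering the
`aᵢ` by a permutation `σ`, one has `π_an ≅ ⟪a_{σ(1)},…,a_{σ(m)}⟫` where
`p^m = [F^p(a₁,…,aₙ) : F^p]`.  The isomorphism `π_an ≅ ⟪…⟫` is expressed by the
characterizing property of the anisotropic part: `⟪a_{σ(1)},…,a_{σ(m)}⟫` is
anisotropic and represents exactly the same values as `π`. -/
theorem stmt6 {p : ℕ} [Fact p.Prime] (F : Type*) [Field F] [CharP F p]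
    (K : Subfield F) (hK : (K : Set F) = Set.range fun x : F => x ^ p)
    (n : ℕ) (a : Fin n → F) :
    ∃ (m : ℕ) (hm : m ≤ n) (σ : Equiv.Perm (Fin n)),
      (p : ℕ) ^ m = Module.finrank K (IntermediateField.adjoin K (Set.range a)) ∧
      (∀ x, pfVal p m (fun i => a (σ (Fin.castLE hm i))) x = 0 → x = 0) ∧
      Set.range (pfVal p m (fun i => a (σ (Fin.castLE hm i)))) =
        Set.range (pfVal p n a) := by
  obtain ⟨m, f, hf, hani, hadj⟩ := exists_pfAnisotropic_subfamily hK a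
  have hm : m ≤ n := by simpa using Fintype.card_le_of_injective f hf
  obtain ⟨σ, hσ⟩ :=
    Equiv.Perm.exists_extending_pair (Fin.castLE hm) f (Fin.castLE_injective hm) hf
  have hσf : (fun i => a (σ (Fin.castLE hm i))) = a ∘ f := funext fun i => congrArg a (hσ i)
  refine ⟨m, hm, σ, ?_, ?_, ?_⟩
  · rw [← hadj, hani.finrank_adjoin hK]
  · rw [hσf]
    exact hani
  · rw [hσf, range_pfVal_eq_adjoin hK, range_pfVal_eq_adjoin hK, hadj]
end

section
/- Let φ and ψ be quasilinear p-forms over a field F of characteristic p, and suppose K and L are field extensions of F such that there exists an F-place K ⇀ L (a local F-algebra homomorphism R → L from a valuation subring R of K containing F). Then i₀(φ_L) ≥ i₀(φ_K). -/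
open scoped BigOperators

/-- Defect index of the diagonal quasilinear `p`-form with coefficients `b`. -/
noncomputable def defectIdx (p : ℕ) (K : Type*) [Field K] {ι : Type*} [Fintype ι]
    (b : ι → K) : ℕ :=
  Module.finrank K (Submodule.span K {x : ι → K | ∑ i, b i * x i ^ p = 0})

/-!
The zero set of a quasilinear `p`-form is a linear subspace, since `x ↦ ∑ bᵢ xᵢ ^ p` is
additive and `p`-semilinear. A nonzero zero over `K` can be rescaled so that its coordinates lie in
the valuation ring and one of them equals `1`; its image under the place is then a nonzero zero
over `L` supported inside the support of the original one. Now choose a set `S` of coordinates for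
which the coordinate subspace `L^S` is a complement of the zero set over `L`. The zero set over `K`
meets `K^S` trivially, so its dimension is at most `n - |S|`, the dimension of the zero set
over `L`.
-/

open Module Submodule

namespace Module.Basis

variable {E V ι : Type*} [Field E] [AddCommGroup V] [Module E V] [Finite ι]

theorem finrank_span_image (b : Basis ι E V) (S : Set ι) :
    finrank E (span E (b '' S)) = Nat.card S := by
  have := Fintype.ofFinite S
  rw [Set.image_eq_range, Nat.card_eq_fintype_card]
  exact finrank_span_eq_card (b.linearIndependent.comp _ Subtype.val_injective)

theorem finrank_add_card_le_of_disjoint (b : Basis ι E V) {W : Submodule E V} {S : Set ι}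
    (h : Disjoint W (span E (b '' S))) : finrank E W + Nat.card S ≤ finrank E V := by
  have := b.finiteDimensional_of_finite
  rw [← b.finrank_span_image S]
  exact finrank_add_finrank_le_of_disjoint h

theorem exists_disjoint_span_image_finrank_add_card_eq (b : Basis ι E V) (W : Submodule E V) :
    ∃ S : Set ι, Disjoint W (span E (b '' S)) ∧ finrank E W + Nat.card S = finrank E V := by
  have := b.finiteDimensional_of_finite
  obtain ⟨S, -, -, hspan, hli⟩ := exists_linearIndepOn_extension (v := W.mkQ ∘ b)
    (linearIndepOn_empty E _) (Set.empty_subset Set.univ)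
  have := Fintype.ofFinite S
  refine ⟨S, ?_, ?_⟩
  · have := range_ker_disjoint (f := W.mkQ) (v := b ∘ Subtype.val) hli
    rwa [Set.range_comp, Subtype.range_coe, ker_mkQ, disjoint_comm] at this
  · have htop : span E (W.mkQ ∘ b '' S) = ⊤ := by
      refine eq_top_iff.mpr (le_trans (le_of_eq ?_) (span_le.mpr hspan))
      rw [Set.image_comp, span_image, Set.image_univ, b.span_eq, Submodule.map_top, range_mkQ]
    have := finrank_span_eq_card hli
    rw [← Set.image_eq_range, htop, finrank_top] at this
    rw [Nat.card_eq_fintype_card, ← this, add_comm, W.finrank_quotient_add_finrank]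

end Module.Basis

theorem Pi.mem_span_basisFun_image_iff {E ι : Type*} [Field E] [Finite ι] {S : Set ι}
    {x : ι → E} : x ∈ span E (Pi.basisFun E ι '' S) ↔ ∀ i ∉ S, x i = 0 := by
  simp only [Basis.mem_span_image, Set.subset_def, Finset.mem_coe, Finsupp.mem_support_iff,
    Pi.basisFun_repr]
  exact forall_congr' fun i => not_imp_comm

theorem finrank_le_finrank_of_forall_exists_support_subset {K L ι : Type*} [Field K] [Field L]
    [Finite ι] (W : Submodule K (ι → K)) (W' : Submodule L (ι → L))
    (h : ∀ x ∈ W, x ≠ 0 → ∃ y ∈ W', y ≠ 0 ∧ ∀ i, x i = 0 → y i = 0) :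
    finrank K W ≤ finrank L W' := by
  obtain ⟨S, hS, hcard⟩ := (Pi.basisFun L ι).exists_disjoint_span_image_finrank_add_card_eq W'
  have hW : Disjoint W (span K (Pi.basisFun K ι '' S)) := by
    refine disjoint_def.mpr fun x hxW hxS => by_contra fun hx => ?_
    obtain ⟨y, hyW, hy, hsupp⟩ := h x hxW hx
    have hyS : y ∈ span L (Pi.basisFun L ι '' S) := Pi.mem_span_basisFun_image_iff.mpr
      fun i hi => hsupp i (Pi.mem_span_basisFun_image_iff.mp hxS i hi)
    exact hy (disjoint_def.mp hS y hyW hyS)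
  have hle := (Pi.basisFun K ι).finrank_add_card_le_of_disjoint hW
  have := Fintype.ofFinite ι
  rw [finrank_pi] at hle hcard
  omega

theorem ValuationSubring.exists_forall_div_mem {K ι : Type*} [Field K] [Finite ι]
    (R : ValuationSubring K) {x : ι → K} (hx : x ≠ 0) : ∃ i, x i ≠ 0 ∧ ∀ j, x j / x i ∈ R := by
  have : Nonempty ι := by
    by_contra h
    exact hx (funext fun i => (not_nonempty_iff.mp h).elim i)
  obtain ⟨i, hi⟩ := Finite.exists_max fun j => R.valuation (x j)
  refine ⟨i, fun hxi => hx (funext fun j => ?_), fun j => ?_⟩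
  · simpa [hxi] using hi j
  · exact R.mem_of_valuation_le_one _ (by rw [map_div₀]; exact div_le_one_of_le₀ (hi j) zero_le)

theorem exists_specialization_of_sum_mul_pow_eq_zero {K L ι : Type*} [Field K] [CommRing L]
    [Nontrivial L] [Fintype ι] (R : ValuationSubring K) (g : R →+* L) (b : ι → R) (p : ℕ)
    {x : ι → K} (hx : ∑ i, (b i : K) * x i ^ p = 0) (hx0 : x ≠ 0) :
    ∃ y : ι → L, ∑ i, g (b i) * y i ^ p = 0 ∧ y ≠ 0 ∧ ∀ i, x i = 0 → y i = 0 := by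
  obtain ⟨i₀, hxi₀, hdiv⟩ := R.exists_forall_div_mem hx0
  let u : ι → R := fun j => ⟨x j / x i₀, hdiv j⟩
  have hu : ∑ i, b i * u i ^ p = 0 := by
    apply Subtype.ext
    push_cast [u]
    simp only [div_pow, ← mul_div_assoc, ← Finset.sum_div, hx, zero_div]
  refine ⟨fun j => g (u j), ?_, fun h => ?_, fun j hj => ?_⟩
  · simp only [← map_pow, ← map_mul, ← map_sum, hu, map_zero]
  · have hui₀ : u i₀ = 1 := Subtype.ext (div_self hxi₀)
    simpa [hui₀] using congrFun h i₀
  · have huj : u j = 0 := Subtype.ext (by simp [u, hj])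
    simp [huj]

section QuasilinearForm

variable (p : ℕ) {E ι : Type*} [Fintype ι]

def quasilinearForm [CommRing E] [ExpChar E p] (b : ι → E) : (ι → E) →ₛₗ[frobenius E p] E where
  toFun x := ∑ i, b i * x i ^ p
  map_add' x y := by
    simp only [Pi.add_apply, add_pow_expChar, mul_add, Finset.sum_add_distrib]
  map_smul' a x := by
    simp only [Pi.smul_apply, smul_eq_mul, frobenius_def, Finset.mul_sum, mul_pow, mul_left_comm]

theorem defectIdx_eq_finrank_ker [Field E] [ExpChar E p] (b : ι → E) :
    defectIdx p E b = finrank E (LinearMap.ker (quasilinearForm p b)) := by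
  rw [defectIdx, ← span_eq (LinearMap.ker (quasilinearForm p b))]
  rfl

theorem finrank_ker_quasilinearForm_le_of_valuationSubring {K L : Type*} [Field K] [Field L]
    [ExpChar K p] [ExpChar L p] (R : ValuationSubring K) (g : R →+* L) (b : ι → R) :
    finrank K (LinearMap.ker (quasilinearForm p fun i => (b i : K))) ≤
      finrank L (LinearMap.ker (quasilinearForm p fun i => g (b i))) :=
  finrank_le_finrank_of_forall_exists_support_subset _ _ fun _ hx hx0 =>
    exists_specialization_of_sum_mul_pow_eq_zero R g b p hx hx0

end QuasilinearForm

theorem stmt13_general {p : ℕ} [Fact p.Prime] (F : Type*) [Field F] [CharP F p]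
    (K L : Type*) [Field K] [Field L] [Algebra F K] [Algebra F L]
    (R : ValuationSubring K) (hR : ∀ x : F, algebraMap F K x ∈ R)
    (g : R →+* L)
    (hg : ∀ x : F, g ⟨algebraMap F K x, hR x⟩ = algebraMap F L x)
    (n : ℕ) (c : Fin n → F) :
    defectIdx p K (fun i => algebraMap F K (c i)) ≤
      defectIdx p L (fun i => algebraMap F L (c i)) := by
  have : CharP K p := charP_of_injective_algebraMap (algebraMap F K).injective p
  have : CharP L p := charP_of_injective_algebraMap (algebraMap F L).injective p
  simp only [defectIdx_eq_finrank_ker, ← hg]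
  exact finrank_ker_quasilinearForm_le_of_valuationSubring p R g fun i => ⟨_, hR (c i)⟩

/-- Let `φ` be a quasilinear `p`-form over `F` (char `p`, given in
diagonal form `⟨c₀,…,c_{n-1}⟩`), and `K`, `L` field extensions of `F` such that there
is an `F`-place `K ⇀ L`, i.e. a valuation subring `R` of `K` containing `F` and a
local `F`-algebra homomorphism `g : R → L`.  Then `i₀(φ_L) ≥ i₀(φ_K)`. -/
theorem stmt13 {p : ℕ} [Fact p.Prime] (F : Type*) [Field F] [CharP F p]
    (K L : Type*) [Field K] [Field L] [Algebra F K] [Algebra F L]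
    (R : ValuationSubring K) (hR : ∀ x : F, algebraMap F K x ∈ R)
    (g : R →+* L) [IsLocalHom g]
    (hg : ∀ x : F, g ⟨algebraMap F K x, hR x⟩ = algebraMap F L x)
    (n : ℕ) (c : Fin n → F) :
    defectIdx p K (fun i => algebraMap F K (c i)) ≤
      defectIdx p L (fun i => algebraMap F L (c i)) :=
  stmt13_general F K L R hR g hg n c
end
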